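/- Let p ≥ 3 and β > 0. For every ε > 0 there is a constant K = K(β,p,ε) such that for all N, E[ |Z_ε^≤ − 𝒵_N(β)| ] ≤ exp( −β²·N·ε²/2 + K·N^{2−p} ). -/

import Mathlib

open MeasureTheory ProbabilityTheory Filter Topology

noncomputable section

namespace PSpinSK

/-- `I_N`: the p-subsets of `{0,…,N-1}`, encoding strictly increasing p-tuples. -/
def indexSet (N p : ℕ) : Finset (Finset ℕ) := Finset.powersetCard p (Finset.range N)

/-- `σ_A = ∏_{i∈A} σ_i`, where the configuration `σ ∈ {−1,1}^N` is encoded by the set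
`s ⊆ {0,…,N-1}` of sites where `σ_i = +1`. -/
def sigmaA (s A : Finset ℕ) : ℝ := ∏ i ∈ A, (if i ∈ s then (1 : ℝ) else -1)

/-- Uniform average `E_σ` over `σ ∈ {−1,1}^N`. -/
def Esigma (N : ℕ) (f : Finset ℕ → ℝ) : ℝ :=
  (2 ^ N : ℝ)⁻¹ * ∑ s ∈ Finset.powerset (Finset.range N), f s

/-- `a_N = √N · C(N,p)^{-1/2}`. -/
def aN (N p : ℕ) : ℝ := Real.sqrt N / Real.sqrt (N.choose p)

/-- The Hamiltonian `H_N(σ) = −a_N Σ_{A∈I_N} J_A σ_A`. -/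
def Ham (N p : ℕ) (J : Finset ℕ → ℝ) (s : Finset ℕ) : ℝ :=
  -(aN N p) * ∑ A ∈ indexSet N p, J A * sigmaA s A

/-- The partition function `Z_N(β)`. -/
def Zfun (N p : ℕ) (β : ℝ) (J : Finset ℕ → ℝ) : ℝ :=
  Esigma N (fun s => Real.exp (-β * Ham N p J s))

/-- The free energy `F_N(β)`. -/
def freeEnergy (N p : ℕ) (β : ℝ) (J : Finset ℕ → ℝ) : ℝ :=
  (N : ℝ)⁻¹ * Real.log (Zfun N p β J)

/-- `J_N(β) = β²/(2 C(N,p)) Σ_A J_A²`. -/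
def Jterm (N p : ℕ) (β : ℝ) (J : Finset ℕ → ℝ) : ℝ :=
  β ^ 2 / (2 * (N.choose p : ℝ)) * ∑ A ∈ indexSet N p, (J A) ^ 2

/-- `𝒵_N(β) = Z_N(β) e^{−N J_N(β)}`. -/
def calZ (N p : ℕ) (β : ℝ) (J : Finset ℕ → ℝ) : ℝ :=
  Zfun N p β J * Real.exp (-(N : ℝ) * Jterm N p β J)

/-- Truncated partition function `Z_ε^≤`. -/
def Zle (N p : ℕ) (β ε : ℝ) (J : Finset ℕ → ℝ) : ℝ :=
  Esigma N (fun s => Real.exp (-β * Ham N p J s) *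
      (if -Ham N p J s ≤ (1 + ε) * β * N then 1 else 0)) *
    Real.exp (-(N : ℝ) * Jterm N p β J)

/-- Truncated partition function `Z_ε^>`. -/
def Zgt (N p : ℕ) (β ε : ℝ) (J : Finset ℕ → ℝ) : ℝ :=
  Esigma N (fun s => Real.exp (-β * Ham N p J s) *
      (if (1 + ε) * β * N < -Ham N p J s then 1 else 0)) *
    Real.exp (-(N : ℝ) * Jterm N p β J)

def phi (m : ℝ) : ℝ :=
  (1 - m) / 2 * Real.log (1 - m) + (1 + m) / 2 * Real.log (1 + m)

/-- `β_p = (inf_{0<m<1} (1+m^{−p}) φ(m))^{1/2}`. -/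
def betaP (p : ℕ) : ℝ :=
  Real.sqrt (sInf ((fun m => (1 + (m ^ p)⁻¹) * phi m) '' Set.Ioo (0 : ℝ) 1))

/-- The family `(J_A)` consists of independent standard Gaussian random variables. -/
def stdGaussians {Ω : Type*} [MeasurableSpace Ω] (P : Measure Ω)
    (J : Finset ℕ → Ω → ℝ) : Prop :=
  (∀ A, Measurable (J A)) ∧ iIndepFun J P ∧
    ∀ A, P.map (J A) = gaussianReal 0 1

/-- Convergence in distribution (weak convergence of the laws) to the limiting measure `μ`. -/
def TendstoInDistribution {Ω : Type*} [MeasurableSpace Ω] (P : Measure Ω)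
    (X : ℕ → Ω → ℝ) (μ : Measure ℝ) : Prop :=
  ∀ f : BoundedContinuousFunction ℝ ℝ,
    Tendsto (fun N => ∫ ω, f (X N ω) ∂P) atTop (𝓝 (∫ x, f x ∂μ))

/-- Convergence in probability to `0`. -/
def TendstoInProbZero {Ω : Type*} [MeasurableSpace Ω] (P : Measure Ω)
    (X : ℕ → Ω → ℝ) : Prop :=
  ∀ δ : ℝ, 0 < δ → Tendsto (fun N => P {ω | δ ≤ |X N ω|}) atTop (𝓝 0)

/-- `d_{p−2k} = (−1)^k p! / ((p−2k)! 2^k k!)`. -/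
def dcoef (p k : ℕ) : ℝ :=
  (-1) ^ k * (p.factorial : ℝ) / (((p - 2 * k).factorial : ℝ) * 2 ^ k * (k.factorial : ℝ))

end PSpinSK

namespace PSpinSK

/-- The overlap `R_N(σ,σ')`. -/
def Rov (N : ℕ) (s t : Finset ℕ) : ℝ :=
  (N : ℝ)⁻¹ * ∑ i ∈ Finset.range N,
    (if i ∈ s then (1 : ℝ) else -1) * (if i ∈ t then (1 : ℝ) else -1)

/-- Uniform average over pairs `(σ,σ')`. -/
def Esigma2 (N : ℕ) (f : Finset ℕ → Finset ℕ → ℝ) : ℝ :=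
  Esigma N (fun s => Esigma N (fun t => f s t))

/-- The large-overlap contribution `B` to the second moment of `Z_ε^≤`. -/
def Bterm (N p : ℕ) (β ε : ℝ) {Ω : Type*} [MeasurableSpace Ω] (P : Measure Ω)
    (J : Finset ℕ → Ω → ℝ) : ℝ :=
  Esigma2 N (fun s t => ∫ ω,
    (Real.exp (-β * Ham N p (fun A => J A ω) s - β * Ham N p (fun A => J A ω) t) *
        (if -Ham N p (fun A => J A ω) s ≤ (1 + ε) * β * N then 1 else 0) *
        (if -Ham N p (fun A => J A ω) t ≤ (1 + ε) * β * N then 1 else 0) *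
        Real.exp (-2 * (N : ℝ) * Jterm N p β (fun A => J A ω)) *
        (if (Real.log N)⁻¹ ≤ |Rov N s t| then 1 else 0)) ∂P)

/-- The small-overlap contribution `A` to the second moment of `Z_ε^≤`. -/
def Aterm (N p : ℕ) (β ε : ℝ) {Ω : Type*} [MeasurableSpace Ω] (P : Measure Ω)
    (J : Finset ℕ → Ω → ℝ) : ℝ :=
  Esigma2 N (fun s t => ∫ ω,
    (Real.exp (-β * Ham N p (fun A => J A ω) s - β * Ham N p (fun A => J A ω) t) *
        (if -Ham N p (fun A => J A ω) s ≤ (1 + ε) * β * N then 1 else 0) *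
        (if -Ham N p (fun A => J A ω) t ≤ (1 + ε) * β * N then 1 else 0) *
        Real.exp (-2 * (N : ℝ) * Jterm N p β (fun A => J A ω)) *
        (if |Rov N s t| < (Real.log N)⁻¹ then 1 else 0)) ∂P)

/-- `T_N(β) = 1 − β⁴ (E_σ H²)²/8 − β³ E_σ H³/6 + β⁴ E_σ H⁴/24`. -/
def Tterm (N p : ℕ) (β : ℝ) (J : Finset ℕ → ℝ) : ℝ :=
  1 - β ^ 4 * (Esigma N (fun s => (Ham N p J s) ^ 2)) ^ 2 / 8
    - β ^ 3 * Esigma N (fun s => (Ham N p J s) ^ 3) / 6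
    + β ^ 4 * Esigma N (fun s => (Ham N p J s) ^ 4) / 24

/-- `ℋ₄`: sum over quadruples of pairwise distinct multi-indices. -/
def H4 (N p : ℕ) (J : Finset ℕ → ℝ) : ℝ :=
  aN N p ^ 4 / 24 *
    ∑ A ∈ indexSet N p, ∑ B ∈ indexSet N p, ∑ C ∈ indexSet N p, ∑ D ∈ indexSet N p,
      if A ≠ B ∧ A ≠ C ∧ A ≠ D ∧ B ≠ C ∧ B ≠ D ∧ C ≠ D then
        J A * J B * J C * J D *
          Esigma N (fun s => sigmaA s A * sigmaA s B * sigmaA s C * sigmaA s D)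
      else 0

/-- The limiting variance `σ(β,p)²` in the `p` even case. -/
def sigmaEven2 (β : ℝ) (p : ℕ) : ℝ :=
  β ^ 6 / 3 *
    ∫ x, (∑ k ∈ Finset.range (p / 2 + 1), dcoef p k * x ^ (p - 2 * k)) ^ 3
      ∂(gaussianReal 0 1)

/-- The limiting variance `σ(β,p)²` in the `p` odd case. -/
def sigmaOdd2 (β : ℝ) (p : ℕ) : ℝ :=
  β ^ 8 / 12 *
      (∫ x, (∑ k ∈ Finset.range (p / 2 + 1), dcoef p k * x ^ (p - 2 * k)) ^ 4
        ∂(gaussianReal 0 1)) -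
    β ^ 8 * (p.factorial : ℝ) ^ 2 / 8

/-- The scaling `α_N(p)`. -/
def alphaN (N p : ℕ) : ℝ :=
  if Even p then (N : ℝ) ^ (3 * (p : ℝ) / 4 - 3 / 2) else (N : ℝ) ^ ((p : ℝ) - 2)

/-- The limiting mean `μ(β,p)`. -/
def muBP (β : ℝ) (p : ℕ) : ℝ :=
  if Even p then 0 else -(β ^ 4) * (p.factorial : ℝ) / 4

/-- The limiting variance `σ(β,p)²`. -/
def sigmaBP2 (β : ℝ) (p : ℕ) : ℝ :=
  if Even p then sigmaEven2 β p else sigmaOdd2 β p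

end PSpinSK

/-!
`|Z_ε^≤ - 𝒵_N(β)|` is the truncated part `Z_ε^>`. On its event, the exponential Chebyshev bound
`1 ≤ e^{εβ(-H_N(σ) - (1+ε)βN)}` bounds `Z_ε^>` by
`e^{-ε(1+ε)β²N} E_σ e^{θ(-H_N(σ)) - N J_N(β)}` with `θ = (1+ε)β`. For each `σ` the exponent is a
sum over `A` of independent terms `θ a_N σ_A J_A - c J_A²`, `c = Nβ²/(2 C(N,p))`, whose exponential
moments are the Gaussian integrals `(1+2c)^{-1/2} e^{θ²a_N²/(2(1+2c))}`. Then
`log(1+2c) ≥ 2c/(1+2c)` bounds the product by `e^{-β²Nε²/2}`, so `K = 0` works.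
-/
open Real

lemma gaussianPDFReal_mul_exp_neg_mul_sq {c : ℝ} (hc : 0 < 1 + 2 * c) (x : ℝ) :
    gaussianPDFReal 0 1 x * exp (-c * x ^ 2) =
      (√(1 + 2 * c))⁻¹ * gaussianPDFReal 0 (1 + 2 * c)⁻¹.toNNReal x := by
  simp only [gaussianPDFReal, Real.coe_toNNReal _ (inv_pos.2 hc).le, NNReal.coe_one, sub_zero,
    mul_one]
  rw [sqrt_mul' _ (inv_nonneg.2 hc.le), Real.sqrt_inv, mul_inv, inv_inv, mul_assoc, ← exp_add,
    show -x ^ 2 / 2 + -c * x ^ 2 = -x ^ 2 / (2 * (1 + 2 * c)⁻¹) by field_simp; ring]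
  field_simp

lemma integral_exp_mul_sub_mul_sq_gaussianReal (θ : ℝ) {c : ℝ} (hc : 0 < 1 + 2 * c) :
    ∫ x, exp (θ * x - c * x ^ 2) ∂gaussianReal 0 1 =
      (√(1 + 2 * c))⁻¹ * exp (θ ^ 2 / (2 * (1 + 2 * c))) := by
  have hv : (1 + 2 * c)⁻¹.toNNReal ≠ 0 := by simpa using hc
  calc ∫ x, exp (θ * x - c * x ^ 2) ∂gaussianReal 0 1
      = ∫ x, gaussianPDFReal 0 1 x * exp (-c * x ^ 2) * exp (θ * x) := by
        rw [integral_gaussianReal_eq_integral_smul one_ne_zero]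
        congr with x
        rw [smul_eq_mul, sub_eq_add_neg, exp_add, neg_mul]
        ring
    _ = (√(1 + 2 * c))⁻¹ * mgf id (gaussianReal 0 (1 + 2 * c)⁻¹.toNNReal) θ := by
        simp_rw [gaussianPDFReal_mul_exp_neg_mul_sq hc, mgf,
          integral_gaussianReal_eq_integral_smul hv, ← integral_const_mul, smul_eq_mul, id,
          mul_assoc]
    _ = _ := by
        rw [mgf_id_gaussianReal, Real.coe_toNNReal _ (inv_pos.2 hc).le]
        beta_reduce
        congr 2
        field_simp
        ring

lemma exp_mul_ite_lt_le {b l t x : ℝ} (hl : 0 ≤ l) :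
    exp (b * x) * (if t < x then 1 else 0) ≤ exp (-(l * t)) * exp ((b + l) * x) := by
  split_ifs with h
  · rw [mul_one, ← exp_add]
    exact exp_le_exp.2 (by nlinarith)
  · rw [mul_zero]
    positivity

lemma inv_sqrt_le_exp_one_sub_inv {u : ℝ} (hu : 0 < u) : (√u)⁻¹ ≤ exp (-(1 - u⁻¹) / 2) := by
  rw [← exp_log (inv_pos.2 (sqrt_pos.2 hu)), log_inv, log_sqrt hu.le]
  exact exp_le_exp.2 (by linarith [one_sub_inv_le_log_of_pos hu])

namespace PSpinSK

lemma sigmaA_sq (s A : Finset ℕ) : sigmaA s A ^ 2 = 1 := by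
  rw [sigmaA, ← Finset.prod_pow]
  exact Finset.prod_eq_one fun i _ => by split_ifs <;> norm_num

lemma aN_sq (N p : ℕ) : aN N p ^ 2 = N / N.choose p := by
  rw [aN, div_pow, sq_sqrt (Nat.cast_nonneg _), sq_sqrt (Nat.cast_nonneg _)]

lemma card_indexSet (N p : ℕ) : (indexSet N p).card = N.choose p := by
  rw [indexSet, Finset.card_powersetCard, Finset.card_range]

section Esigma

variable {N : ℕ}

lemma Esigma_mono {f g : Finset ℕ → ℝ} (h : ∀ s, f s ≤ g s) : Esigma N f ≤ Esigma N g :=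
  mul_le_mul_of_nonneg_left (Finset.sum_le_sum fun s _ => h s) (by positivity)

lemma Esigma_nonneg {f : Finset ℕ → ℝ} (h : ∀ s, 0 ≤ f s) : 0 ≤ Esigma N f :=
  mul_nonneg (by positivity) (Finset.sum_nonneg fun s _ => h s)

lemma Esigma_const (c : ℝ) : Esigma N (fun _ => c) = c := by
  rw [Esigma, Finset.sum_const, Finset.card_powerset, Finset.card_range, nsmul_eq_mul]
  push_cast
  field_simp

lemma Esigma_sub (f g : Finset ℕ → ℝ) :
    Esigma N (fun s => f s - g s) = Esigma N f - Esigma N g := by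
  simp only [Esigma, Finset.sum_sub_distrib, mul_sub]

lemma Esigma_mul_const (f : Finset ℕ → ℝ) (c : ℝ) :
    Esigma N (fun s => f s * c) = Esigma N f * c := by
  simp only [Esigma, mul_assoc, Finset.sum_mul]

variable {Ω : Type*} [MeasurableSpace Ω] {P : Measure Ω} {F : Finset ℕ → Ω → ℝ}

lemma integrable_Esigma (hF : ∀ s, Integrable (F s) P) :
    Integrable (fun ω => Esigma N (fun s => F s ω)) P :=
  (integrable_finsetSum _ fun s _ => hF s).const_mul _

lemma integral_Esigma (hF : ∀ s, Integrable (F s) P) :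
    ∫ ω, Esigma N (fun s => F s ω) ∂P = Esigma N (fun s => ∫ ω, F s ω ∂P) := by
  simp only [Esigma]
  rw [integral_const_mul, integral_finsetSum _ fun s _ => hF s]

end Esigma

lemma calZ_sub_Zle (N p : ℕ) (β ε : ℝ) (J : Finset ℕ → ℝ) :
    calZ N p β J - Zle N p β ε J = Zgt N p β ε J := by
  rw [calZ, Zle, Zgt, Zfun, ← sub_mul, ← Esigma_sub]
  congr 2
  ext s
  by_cases h : -Ham N p J s ≤ (1 + ε) * β * N
  · simp [h]
  · simp [h, lt_of_not_ge h]

lemma Zgt_nonneg (N p : ℕ) (β ε : ℝ) (J : Finset ℕ → ℝ) : 0 ≤ Zgt N p β ε J :=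
  mul_nonneg (Esigma_nonneg fun s => mul_nonneg (exp_pos _).le (by split_ifs <;> norm_num))
    (exp_pos _).le

lemma abs_Zle_sub_calZ (N p : ℕ) (β ε : ℝ) (J : Finset ℕ → ℝ) :
    |Zle N p β ε J - calZ N p β J| = Zgt N p β ε J := by
  rw [abs_sub_comm, calZ_sub_Zle, abs_of_nonneg (Zgt_nonneg ..)]

lemma Zgt_le_Esigma (N p : ℕ) {β ε : ℝ} (hβ : 0 ≤ β) (hε : 0 ≤ ε) (J : Finset ℕ → ℝ) :
    Zgt N p β ε J ≤ Esigma N fun s => exp (-(ε * β * ((1 + ε) * β * N))) *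
      exp ((1 + ε) * β * -Ham N p J s - N * Jterm N p β J) := by
  rw [Zgt, ← Esigma_mul_const]
  refine Esigma_mono fun s => ?_
  calc exp (-β * Ham N p J s) * (if (1 + ε) * β * N < -Ham N p J s then 1 else 0) *
        exp (-N * Jterm N p β J)
      ≤ exp (-(ε * β * ((1 + ε) * β * N))) * exp ((β + ε * β) * -Ham N p J s) *
        exp (-N * Jterm N p β J) := by
        rw [neg_mul_comm]
        exact mul_le_mul_of_nonneg_right (exp_mul_ite_lt_le (mul_nonneg hε hβ)) (exp_pos _).le
    _ = _ := by
        rw [mul_assoc, ← exp_add]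
        congr 2
        ring

lemma mul_neg_Ham_sub_Jterm (N p : ℕ) (θ β : ℝ) (J : Finset ℕ → ℝ) (s : Finset ℕ) :
    θ * -Ham N p J s - N * Jterm N p β J = ∑ A ∈ indexSet N p,
      (θ * aN N p * sigmaA s A * J A - N * β ^ 2 / (2 * N.choose p) * J A ^ 2) := by
  simp only [Ham, Jterm, Finset.sum_sub_distrib, Finset.mul_sum, ← Finset.sum_neg_distrib]
  congr 1 <;> refine Finset.sum_congr rfl fun A _ => by ring

lemma mgf_mul_neg_Ham_sub_Jterm {Ω : Type*} [MeasurableSpace Ω] {P : Measure Ω}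
    {J : Finset ℕ → Ω → ℝ} (hJ : stdGaussians P J) (N p : ℕ) (θ β : ℝ) (s : Finset ℕ) :
    mgf (fun ω => θ * -Ham N p (J · ω) s - N * Jterm N p β (J · ω)) P 1 =
      ((√(1 + N * β ^ 2 / N.choose p))⁻¹ *
        exp (θ ^ 2 * (N / N.choose p) / (2 * (1 + N * β ^ 2 / N.choose p)))) ^ N.choose p := by
  obtain ⟨hJm, hJi, hJmap⟩ := hJ
  set c : ℝ := N * β ^ 2 / (2 * N.choose p)
  have hc : 1 + N * β ^ 2 / N.choose p = 1 + 2 * c := by ring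
  set Y : Finset ℕ → Ω → ℝ := fun A ω => θ * aN N p * sigmaA s A * J A ω - c * J A ω ^ 2
  have hYm : ∀ A, Measurable (Y A) := fun A => by fun_prop
  have hY : iIndepFun Y P :=
    hJi.comp (fun A x => θ * aN N p * sigmaA s A * x - c * x ^ 2) fun A => by fun_prop
  have hsum : (fun ω => θ * -Ham N p (J · ω) s - N * Jterm N p β (J · ω)) =
      ∑ A ∈ indexSet N p, Y A := by
    ext ω
    rw [Finset.sum_apply, mul_neg_Ham_sub_Jterm]
  have hYA : ∀ A ∈ indexSet N p, mgf (Y A) P 1 =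
      (√(1 + 2 * c))⁻¹ * exp (θ ^ 2 * (N / N.choose p) / (2 * (1 + 2 * c))) := fun A _ => by
    calc mgf (Y A) P 1
        = ∫ x, exp (θ * aN N p * sigmaA s A * x - c * x ^ 2) ∂(P.map (J A)) := by
          rw [integral_map (hJm A).aemeasurable (by fun_prop)]
          simp only [mgf, one_mul, Y]
      _ = _ := by
          rw [hJmap A, integral_exp_mul_sub_mul_sq_gaussianReal _ (by positivity), mul_pow,
            mul_pow, sigmaA_sq, aN_sq, mul_one]
  rw [hsum, hY.mgf_sum hYm, Finset.prod_congr rfl hYA, Finset.prod_const, card_indexSet, hc]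

lemma chernoff_bound_le {β ε n : ℝ} (hε : 0 ≤ ε) (hn : 0 ≤ n) {M : ℕ} (hM : M ≠ 0) :
    exp (-(ε * β * ((1 + ε) * β * n))) * ((√(1 + n * β ^ 2 / M))⁻¹ *
      exp (((1 + ε) * β) ^ 2 * (n / M) / (2 * (1 + n * β ^ 2 / M)))) ^ M ≤
        exp (-(β ^ 2) * n * ε ^ 2 / 2) := by
  set u := 1 + n * β ^ 2 / M
  have hMpos : (0 : ℝ) < M := by positivity
  have hu : 1 ≤ u := le_add_of_nonneg_right (by positivity)
  have hw : u⁻¹ ≤ 1 := inv_le_one_of_one_le₀ hu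
  have hexp : (M : ℝ) * (-(1 - u⁻¹) / 2 + ((1 + ε) * β) ^ 2 * (n / M) / (2 * u)) =
      ((1 + ε) ^ 2 - 1) * β ^ 2 * n * u⁻¹ / 2 := by
    simp only [u]
    field_simp
    ring
  calc exp (-(ε * β * ((1 + ε) * β * n))) * ((√u)⁻¹ *
        exp (((1 + ε) * β) ^ 2 * (n / M) / (2 * u))) ^ M
      ≤ exp (-(ε * β * ((1 + ε) * β * n))) * (exp (-(1 - u⁻¹) / 2) *
        exp (((1 + ε) * β) ^ 2 * (n / M) / (2 * u))) ^ M := by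
        gcongr
        exact inv_sqrt_le_exp_one_sub_inv (by linarith)
    _ = exp (-(ε * β * ((1 + ε) * β * n)) + ((1 + ε) ^ 2 - 1) * β ^ 2 * n * u⁻¹ / 2) := by
        rw [← exp_add, ← exp_nat_mul, ← exp_add, hexp]
    _ ≤ exp (-(β ^ 2) * n * ε ^ 2 / 2) := by
        refine exp_le_exp.2 ?_
        nlinarith [mul_nonneg (mul_nonneg (mul_nonneg (sq_nonneg β) hn)
          (by positivity : 0 ≤ 2 * ε + ε ^ 2)) (sub_nonneg.2 hw)]

lemma integral_Zgt_le {Ω : Type*} [MeasurableSpace Ω] {P : Measure Ω} [IsProbabilityMeasure P]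
    {J : Finset ℕ → Ω → ℝ} (hJ : stdGaussians P J) {N p : ℕ} (hpN : p ≤ N) {β ε : ℝ}
    (hβ : 0 ≤ β) (hε : 0 ≤ ε) :
    ∫ ω, Zgt N p β ε (J · ω) ∂P ≤ exp (-(β ^ 2) * N * ε ^ 2 / 2) := by
  set S : Finset ℕ → Ω → ℝ := fun s ω =>
    (1 + ε) * β * -Ham N p (J · ω) s - N * Jterm N p β (J · ω)
  have hmgf := fun s => mgf_mul_neg_Ham_sub_Jterm hJ N p ((1 + ε) * β) β s
  have hS : ∀ s, Integrable (fun ω => exp (S s ω)) P := fun s => by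
    simpa only [one_mul] using (mgf_pos_iff (t := 1)).1 (by rw [hmgf]; positivity)
  have hB : ∀ s, Integrable (fun ω => exp (-(ε * β * ((1 + ε) * β * N))) * exp (S s ω)) P :=
    fun s => (hS s).const_mul _
  calc ∫ ω, Zgt N p β ε (J · ω) ∂P
      ≤ ∫ ω, Esigma N (fun s => exp (-(ε * β * ((1 + ε) * β * N))) * exp (S s ω)) ∂P :=
        integral_mono_of_nonneg (ae_of_all _ fun ω => Zgt_nonneg ..) (integrable_Esigma hB)
          (ae_of_all _ fun ω => Zgt_le_Esigma N p hβ hε _)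
    _ = Esigma N (fun s => exp (-(ε * β * ((1 + ε) * β * N))) * mgf (S s) P 1) := by
        simp only [integral_Esigma hB, integral_const_mul, mgf, one_mul]
    _ ≤ exp (-(β ^ 2) * N * ε ^ 2 / 2) := by
        simp only [S, hmgf, Esigma_const]
        exact chernoff_bound_le hε (Nat.cast_nonneg N) (Nat.choose_pos hpN).ne'

end PSpinSK

open PSpinSK in
theorem pspin_Zle_close_to_calZ_general
    {Ω : Type*} [MeasurableSpace Ω] (P : MeasureTheory.Measure Ω)
    [MeasureTheory.IsProbabilityMeasure P]
    (J : Finset ℕ → Ω → ℝ) (hJ : PSpinSK.stdGaussians P J)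
    (p : ℕ) (β : ℝ) (hβ0 : 0 < β) (ε : ℝ) (hε : 0 < ε) :
    ∃ K : ℝ, ∀ N, p ≤ N →
      (∫ ω, |Zle N p β ε (fun A => J A ω) - calZ N p β (fun A => J A ω)| ∂P) ≤
        Real.exp (-(β ^ 2) * N * ε ^ 2 / 2 + K * (N : ℝ) ^ ((2 : ℝ) - p)) := by
  refine ⟨0, fun N hpN => ?_⟩
  simp only [abs_Zle_sub_calZ, zero_mul, add_zero]
  exact integral_Zgt_le hJ hpN hβ0.le hε.le

open PSpinSK in
/-- `Z_ε^≤` and `𝒵_N(β)` are exponentially close in `L¹`. -/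
theorem pspin_Zle_close_to_calZ
    {Ω : Type*} [MeasurableSpace Ω] (P : MeasureTheory.Measure Ω)
    [MeasureTheory.IsProbabilityMeasure P]
    (J : Finset ℕ → Ω → ℝ) (hJ : PSpinSK.stdGaussians P J)
    (p : ℕ) (hp : 3 ≤ p) (β : ℝ) (hβ0 : 0 < β) (ε : ℝ) (hε : 0 < ε) :
    ∃ K : ℝ, ∀ N, p ≤ N →
      (∫ ω, |Zle N p β ε (fun A => J A ω) - calZ N p β (fun A => J A ω)| ∂P) ≤
        Real.exp (-(β ^ 2) * N * ε ^ 2 / 2 + K * (N : ℝ) ^ ((2 : ℝ) - p)) :=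
  pspin_Zle_close_to_calZ_general P J hJ p β hβ0 ε hε
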